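/- If f ∈ L^p with p ≥ 1 and s > p, then for every λ > 0, G_x f(2λ)_{p,s} ≤ 2^{1/p - 1/s} · G_x f(λ)_{p,s}, where G_x f(δ)_{p,s} = (Σ_{k=1}^{[π/δ]} ((1/(kδ)) ∫_{(k-1)δ}^{kδ} |φ_x(t)|^p dt)^{s/p})^{1/s}. -/

import Mathlib

open MeasureTheory Real intervalIntegral Finset

noncomputable section

/-!
Split each block `[(k-1)·2λ, k·2λ]` of length `2λ` into the two blocks `[(2k-2)λ, (2k-1)λ]` and
`[(2k-1)λ, 2kλ]` of length `λ`. Since the weight `1/(k·2λ)` is at most `1/((2k-1)λ)` and equals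
`1/(2kλ)`, the term of the characteristic at `2λ` is at most the sum of the two corresponding
terms at `λ`. Convexity of
`u ↦ u^(s/p)` gives `(a + b)^(s/p) ≤ 2^(s/p - 1) (a^(s/p) + b^(s/p))`, and taking the `s`-th root
turns the constant into `2^(1/p - 1/s)`.
-/

theorem Real.rpow_add_le_mul_rpow_add_rpow {a b r : ℝ} (ha : 0 ≤ a) (hb : 0 ≤ b) (hr : 1 ≤ r) :
    (a + b) ^ r ≤ 2 ^ (r - 1) * (a ^ r + b ^ r) := by
  lift a to NNReal using ha
  lift b to NNReal using hb
  exact_mod_cast NNReal.rpow_add_le_mul_rpow_add_rpow a b hr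

theorem Finset.sum_Icc_two_mul {M : Type*} [AddCommMonoid M] (c : ℕ → M) (N : ℕ) :
    ∑ j ∈ Icc 1 (2 * N), c j = ∑ k ∈ Icc 1 N, (c (2 * k - 1) + c (2 * k)) := by
  induction N with
  | zero => simp
  | succ n ih =>
    rw [sum_Icc_succ_top (by omega : 1 ≤ n + 1), show 2 * (n + 1) = 2 * n + 1 + 1 by omega,
      sum_Icc_succ_top (by omega : 1 ≤ 2 * n + 1 + 1), sum_Icc_succ_top (by omega : 1 ≤ 2 * n + 1),
      ih, show 2 * n + 1 + 1 - 1 = 2 * n + 1 by omega, add_assoc]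

theorem Nat.two_mul_floor_div_two_mul_le (a δ : ℝ) : 2 * ⌊a / (2 * δ)⌋₊ ≤ ⌊a / δ⌋₊ := by
  have h : a / (2 * δ) = a / δ / (2 : ℕ) := by push_cast; ring
  rw [h, Nat.floor_div_natCast]
  exact Nat.mul_div_le _ _

theorem intervalIntegral.integral_le_add_adjacent_of_nonneg {g : ℝ → ℝ} (hg : 0 ≤ g)
    {a b c : ℝ} (hab : a ≤ b) (hbc : b ≤ c) :
    ∫ t in a..c, g t ≤ (∫ t in a..b, g t) + ∫ t in b..c, g t := by
  by_cases hac : IntervalIntegrable g volume a c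
  · have hb : b ∈ Set.uIcc a c := Set.mem_uIcc_of_le hab hbc
    rw [integral_add_adjacent_intervals
      (hac.mono_set (Set.uIcc_subset_uIcc Set.left_mem_uIcc hb))
      (hac.mono_set (Set.uIcc_subset_uIcc hb Set.right_mem_uIcc))]
  · rw [integral_undef hac]
    exact add_nonneg (integral_nonneg hab fun t _ => hg t) (integral_nonneg hbc fun t _ => hg t)

def gabisoniaTerm (g : ℝ → ℝ) (δ : ℝ) (k : ℕ) : ℝ :=
  1 / (k * δ) * ∫ t in ((k : ℝ) - 1) * δ..(k : ℝ) * δ, g t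

/-- With `g = |φ_x|^p`, `gabisoniaSum g δ (s / p) ⌊π / δ⌋₊ ^ (1 / s)` is `G_x f(δ)_{p,s}`. -/
def gabisoniaSum (g : ℝ → ℝ) (δ r : ℝ) (N : ℕ) : ℝ :=
  ∑ k ∈ Icc 1 N, gabisoniaTerm g δ k ^ r

section Gabisonia

variable {g : ℝ → ℝ} {δ : ℝ}

theorem gabisoniaTerm_nonneg (hg : 0 ≤ g) (hδ : 0 ≤ δ) (k : ℕ) : 0 ≤ gabisoniaTerm g δ k :=
  mul_nonneg (by positivity) (integral_nonneg (by nlinarith) fun t _ => hg t)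

theorem gabisoniaSum_nonneg (hg : 0 ≤ g) (hδ : 0 ≤ δ) (r : ℝ) (N : ℕ) :
    0 ≤ gabisoniaSum g δ r N :=
  sum_nonneg fun k _ => rpow_nonneg (gabisoniaTerm_nonneg hg hδ k) r

theorem gabisoniaTerm_two_mul_le (hg : 0 ≤ g) (hδ : 0 < δ) {k : ℕ} (hk : 1 ≤ k) :
    gabisoniaTerm g (2 * δ) k ≤ gabisoniaTerm g δ (2 * k - 1) + gabisoniaTerm g δ (2 * k) := by
  have hk' : (1 : ℝ) ≤ k := by exact_mod_cast hk
  have hcast : ((2 * k - 1 : ℕ) : ℝ) = 2 * k - 1 := by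
    rw [Nat.cast_sub (by omega)]
    push_cast
    ring
  have hstart : ((k : ℝ) - 1) * (2 * δ) = (2 * k - 1 - 1) * δ := by ring
  have hend : (k : ℝ) * (2 * δ) = 2 * k * δ := by ring
  simp only [gabisoniaTerm, hcast, hstart, hend, Nat.cast_mul, Nat.cast_ofNat]
  have hleft : 0 ≤ ∫ t in (2 * k - 1 - 1) * δ..(2 * k - 1) * δ, g t :=
    integral_nonneg (by nlinarith) fun t _ => hg t
  calc 1 / (2 * k * δ) * ∫ t in (2 * k - 1 - 1) * δ..2 * k * δ, g t
      ≤ 1 / (2 * k * δ) * ((∫ t in (2 * k - 1 - 1) * δ..(2 * k - 1) * δ, g t)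
          + ∫ t in (2 * k - 1) * δ..2 * k * δ, g t) := by
        gcongr
        exact integral_le_add_adjacent_of_nonneg hg (by nlinarith) (by nlinarith)
    _ ≤ 1 / ((2 * k - 1) * δ) * (∫ t in (2 * k - 1 - 1) * δ..(2 * k - 1) * δ, g t)
          + 1 / (2 * k * δ) * ∫ t in (2 * k - 1) * δ..2 * k * δ, g t := by
        rw [mul_add]
        gcongr
        · nlinarith
        · linarith

theorem gabisoniaSum_two_mul_le (hg : 0 ≤ g) (hδ : 0 < δ) {r : ℝ} (hr : 1 ≤ r) {N M : ℕ}
    (hNM : 2 * N ≤ M) : gabisoniaSum g (2 * δ) r N ≤ 2 ^ (r - 1) * gabisoniaSum g δ r M := by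
  have hterm := gabisoniaTerm_nonneg hg hδ.le
  calc gabisoniaSum g (2 * δ) r N
      ≤ ∑ k ∈ Icc 1 N,
          2 ^ (r - 1) * (gabisoniaTerm g δ (2 * k - 1) ^ r + gabisoniaTerm g δ (2 * k) ^ r) := by
        refine sum_le_sum fun k hk => ?_
        calc gabisoniaTerm g (2 * δ) k ^ r
            ≤ (gabisoniaTerm g δ (2 * k - 1) + gabisoniaTerm g δ (2 * k)) ^ r :=
              rpow_le_rpow (gabisoniaTerm_nonneg hg (by positivity) k)
                (gabisoniaTerm_two_mul_le hg hδ (mem_Icc.1 hk).1) (by linarith)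
          _ ≤ _ := rpow_add_le_mul_rpow_add_rpow (hterm _) (hterm _) hr
    _ = 2 ^ (r - 1) * gabisoniaSum g δ r (2 * N) := by
        rw [gabisoniaSum, sum_Icc_two_mul, mul_sum]
    _ ≤ 2 ^ (r - 1) * gabisoniaSum g δ r M := by
        gcongr
        exact sum_le_sum_of_subset_of_nonneg (Icc_subset_Icc le_rfl hNM)
          fun k _ _ => rpow_nonneg (hterm k) r

end Gabisonia

theorem gabisonia_doubling_general
    (f : ℝ → ℝ)
    (p s lam : ℝ) (hp : 1 ≤ p) (hs : p < s) (hlam : 0 < lam) (x : ℝ) :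
    (∑ k ∈ Finset.Icc 1 ⌊π / (2 * lam)⌋₊,
        ((1 / (k * (2 * lam))) * ∫ t in ((k : ℝ) - 1) * (2 * lam)..(k : ℝ) * (2 * lam),
          |f (x + t) + f (x - t) - 2 * f x| ^ p) ^ (s / p)) ^ (1 / s)
      ≤ 2 ^ (1 / p - 1 / s) *
        (∑ k ∈ Finset.Icc 1 ⌊π / lam⌋₊,
          ((1 / (k * lam)) * ∫ t in ((k : ℝ) - 1) * lam..(k : ℝ) * lam,
            |f (x + t) + f (x - t) - 2 * f x| ^ p) ^ (s / p)) ^ (1 / s) := by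
  set g : ℝ → ℝ := fun t => |f (x + t) + f (x - t) - 2 * f x| ^ p
  have hg : 0 ≤ g := fun t => rpow_nonneg (abs_nonneg _) p
  have hp0 : 0 < p := by linarith
  have hs0 : 0 < s := by linarith
  have hsum := gabisoniaSum_nonneg hg hlam.le (s / p) ⌊π / lam⌋₊
  change gabisoniaSum g (2 * lam) (s / p) ⌊π / (2 * lam)⌋₊ ^ (1 / s)
    ≤ 2 ^ (1 / p - 1 / s) * gabisoniaSum g lam (s / p) ⌊π / lam⌋₊ ^ (1 / s)
  calc gabisoniaSum g (2 * lam) (s / p) ⌊π / (2 * lam)⌋₊ ^ (1 / s)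
      ≤ (2 ^ (s / p - 1) * gabisoniaSum g lam (s / p) ⌊π / lam⌋₊) ^ (1 / s) :=
        rpow_le_rpow (gabisoniaSum_nonneg hg (by positivity) _ _)
          (gabisoniaSum_two_mul_le hg hlam ((one_le_div hp0).2 hs.le)
            (Nat.two_mul_floor_div_two_mul_le π lam)) (by positivity)
    _ = 2 ^ (1 / p - 1 / s) * gabisoniaSum g lam (s / p) ⌊π / lam⌋₊ ^ (1 / s) := by
        rw [mul_rpow (by positivity) hsum, ← rpow_mul zero_le_two]
        congr 2
        field_simp

/-- Doubling property of the Gabisonia characteristic: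
`G_x f(2λ)_{p,s} ≤ 2^(1/p-1/s) G_x f(λ)_{p,s}`. -/
theorem gabisonia_doubling
    (f : ℝ → ℝ) (hper : ∀ t, f (t + 2 * π) = f t)
    (p s lam : ℝ) (hp : 1 ≤ p) (hs : p < s) (hlam : 0 < lam) (x : ℝ)
    (hint : IntervalIntegrable
      (fun t => |f (x + t) + f (x - t) - 2 * f x| ^ p) volume (-π) π) :
    (∑ k ∈ Finset.Icc 1 ⌊π / (2 * lam)⌋₊,
        ((1 / (k * (2 * lam))) * ∫ t in ((k : ℝ) - 1) * (2 * lam)..(k : ℝ) * (2 * lam),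
          |f (x + t) + f (x - t) - 2 * f x| ^ p) ^ (s / p)) ^ (1 / s)
      ≤ 2 ^ (1 / p - 1 / s) *
        (∑ k ∈ Finset.Icc 1 ⌊π / lam⌋₊,
          ((1 / (k * lam)) * ∫ t in ((k : ℝ) - 1) * lam..(k : ℝ) * lam,
            |f (x + t) + f (x - t) - 2 * f x| ^ p) ^ (s / p)) ^ (1 / s) :=
  gabisonia_doubling_general f p s lam hp hs hlam x
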